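/- arXiv:1605.04780 — 3 statements merged into one kernel-verified Lean document; each statement's English description precedes it below -/
import Mathlib

section
/- The zeros of the polynomial H_n(x) = \sum_{j=0}^{\lfloor n/2 \rfloor} \binom{n-j}{j} x^j are exactly the numbers -\frac{1}{4}\sec^2(k\pi/(n+1)) for k = 1, 2, \ldots, \lfloor n/2 \rfloor. -/
/-!
Substituting `x = -1 / (4 c ^ 2)` turns the recurrence `H_{n+2} = H_{n+1} + X H_n` into the
Chebyshev recurrence, so that `(2 c) ^ n H_n(x) = U_n(c)`. With `c = cos θ`, `θ = kπ / (n + 1)`,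
this gives `(2 cos θ) ^ n H_n(x) sin θ = sin (kπ) = 0`, so the `n / 2` distinct numbers
`-sec² θ / 4`, `1 ≤ k ≤ n / 2`, are real roots of `H_n`. As `H_n` has degree `n / 2`, they are
all of its complex roots.
-/

open Polynomial Finset Real

section fibPoly

variable (R : Type*)

/-- The polynomial `H_n` of the paper. The terms with `n / 2 < j` vanish, so the sum may run
over `j ≤ n`. -/
noncomputable def fibPoly [Semiring R] (n : ℕ) : R[X] :=
  ∑ j ∈ range (n + 1), C ((n - j).choose j : R) * X ^ j

theorem coeff_fibPoly [Semiring R] (n j : ℕ) : (fibPoly R n).coeff j = (n - j).choose j := by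
  simp only [fibPoly, finsetSum_coeff, coeff_C_mul_X_pow, sum_ite_eq, mem_range]
  split_ifs with hj
  · rfl
  · rw [Nat.choose_eq_zero_of_lt (by omega), Nat.cast_zero]

theorem fibPoly_eq_sum_range_half [Semiring R] (n : ℕ) :
    fibPoly R n = ∑ j ∈ range (n / 2 + 1), C ((n - j).choose j : R) * X ^ j := by
  refine (sum_subset (range_subset_range.mpr (by omega)) fun j hj hj' => ?_).symm
  simp only [mem_range] at hj hj'
  rw [Nat.choose_eq_zero_of_lt (by omega), Nat.cast_zero, C_0, zero_mul]

theorem fibPoly_add_two [Semiring R] (n : ℕ) :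
    fibPoly R (n + 2) = fibPoly R (n + 1) + X * fibPoly R n := by
  ext (_ | j)
  · simp [coeff_fibPoly]
  · simp only [coeff_add, coeff_X_mul, coeff_fibPoly]
    rcases le_or_gt j n with hj | hj
    · rw [show n + 2 - (j + 1) = n - j + 1 by omega, show n + 1 - (j + 1) = n - j by omega,
        Nat.choose_succ_succ', Nat.cast_add, add_comm]
    · rw [Nat.choose_eq_zero_of_lt (by omega : n + 2 - (j + 1) < j + 1),
        Nat.choose_eq_zero_of_lt (by omega : n + 1 - (j + 1) < j + 1),
        Nat.choose_eq_zero_of_lt (by omega : n - j < j), Nat.cast_zero, add_zero]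

theorem natDegree_fibPoly [Semiring R] [CharZero R] (n : ℕ) :
    (fibPoly R n).natDegree = n / 2 := by
  refine natDegree_eq_of_le_of_coeff_ne_zero (natDegree_le_iff_coeff_eq_zero.mpr fun j hj => ?_) ?_
  · rw [coeff_fibPoly, Nat.choose_eq_zero_of_lt (by omega), Nat.cast_zero]
  · rw [coeff_fibPoly, Nat.cast_ne_zero]
    exact (Nat.choose_pos (by omega)).ne'

theorem fibPoly_ne_zero [Semiring R] [CharZero R] (n : ℕ) : fibPoly R n ≠ 0 := by
  intro h
  simpa [h] using coeff_fibPoly R n 0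

theorem eval_fibPoly_mul_pow_eq_eval_U [CommRing R] {x c : R} (h : x * (2 * c) ^ 2 = -1)
    (n : ℕ) :
    (fibPoly R n).eval x * (2 * c) ^ n = (Chebyshev.U R n).eval c := by
  induction n using Nat.twoStepInduction with
  | zero => simp [fibPoly]
  | one => simp [fibPoly, sum_range_succ]
  | more n ih₀ ih₁ =>
    push_cast at ih₁ ⊢
    rw [Chebyshev.U_add_two, fibPoly_add_two]
    simp only [eval_sub, eval_add, eval_mul, eval_X, eval_ofNat, ← ih₀, ← ih₁]
    linear_combination (eval x (fibPoly R n) * (2 * c) ^ n) * h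

end fibPoly

theorem eval_fibPoly_mul_eq_sin {θ : ℝ} (hθ : cos θ ≠ 0) (n : ℕ) :
    (fibPoly ℝ n).eval (-(1 / 4) * (1 / cos θ) ^ 2) * (2 * cos θ) ^ n * sin θ
      = sin ((n + 1) * θ) := by
  rw [eval_fibPoly_mul_pow_eq_eval_U ℝ (by field_simp; ring), Chebyshev.U_real_cos,
    Int.cast_natCast]

theorem natCast_mul_pi_div_mem_Ioo {n k : ℕ} (hk : k ∈ Icc 1 (n / 2)) :
    (k : ℝ) * π / (n + 1) ∈ Set.Ioo 0 (π / 2) := by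
  obtain ⟨hk₁, hk₂⟩ := mem_Icc.mp hk
  have h2k : (2 * k : ℝ) ≤ n := by exact_mod_cast (by omega : 2 * k ≤ n)
  refine ⟨by positivity, ?_⟩
  rw [div_lt_div_iff₀ (by positivity) two_pos]
  nlinarith [pi_pos]

theorem injOn_neg_inv_cos_sq :
    Set.InjOn (fun θ => -(1 / 4) * (1 / cos θ) ^ 2) (Set.Ioo 0 (π / 2)) := by
  intro a ha b hb hab
  have hca := cos_pos_of_mem_Ioo ⟨by linarith [ha.1, pi_pos], ha.2⟩
  have hcb := cos_pos_of_mem_Ioo ⟨by linarith [hb.1, pi_pos], hb.2⟩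
  have hcos_sq : cos a ^ 2 = cos b ^ 2 := by simpa using hab
  exact injOn_cos ⟨ha.1.le, by linarith [ha.2, pi_pos]⟩
    ⟨hb.1.le, by linarith [hb.2, pi_pos]⟩ ((sq_eq_sq₀ hca.le hcb.le).mp hcos_sq)

noncomputable def fibPolyRoots (n : ℕ) : Finset ℝ :=
  (Icc 1 (n / 2)).image fun k : ℕ => -(1 / 4) * (1 / cos (k * π / (n + 1))) ^ 2

theorem card_fibPolyRoots (n : ℕ) : #(fibPolyRoots n) = n / 2 := by
  have hinj : Set.InjOn (fun k : ℕ => (k : ℝ) * π / (n + 1)) (Icc 1 (n / 2)) := by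
    intro a _ b _ hab
    simpa [pi_ne_zero, (by positivity : (n : ℝ) + 1 ≠ 0)] using hab
  rw [fibPolyRoots, card_image_of_injOn, Nat.card_Icc, Nat.add_sub_cancel]
  exact injOn_neg_inv_cos_sq.comp hinj fun k hk => natCast_mul_pi_div_mem_Ioo hk

theorem roots_fibPoly (n : ℕ) : (fibPoly ℝ n).roots = (fibPolyRoots n).val := by
  refine roots_eq_of_natDegree_le_card_of_ne_zero (fun x hx => ?_) ?_ (fibPoly_ne_zero ℝ n)
  · obtain ⟨k, hk, rfl⟩ := mem_image.mp hx
    obtain ⟨hθ₀, hθ₁⟩ := natCast_mul_pi_div_mem_Ioo hk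
    have hcos := cos_pos_of_mem_Ioo ⟨by linarith, hθ₁⟩
    have hsin := sin_pos_of_pos_of_lt_pi hθ₀ (by linarith)
    have hvanish := eval_fibPoly_mul_eq_sin hcos.ne' n
    rw [show ((n : ℝ) + 1) * (k * π / (n + 1)) = k * π by field_simp, sin_nat_mul_pi] at hvanish
    simpa [hcos.ne', hsin.ne'] using hvanish
  · rw [natDegree_fibPoly, card_fibPolyRoots]

theorem stmt_2_general (n : ℕ) :
    let H : Polynomial ℝ := ∑ j ∈ Finset.range (n / 2 + 1), C (((n - j).choose j : ℝ)) * X ^ j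
    ∀ z : ℂ, aeval z H = 0 ↔
      ∃ k ∈ Finset.Icc 1 (n / 2),
        z = (-(1 / 4) * (1 / Real.cos (k * Real.pi / (n + 1))) ^ 2 : ℝ) := by
  intro H z
  have hcard : Multiset.card (fibPoly ℝ n).roots = (fibPoly ℝ n).natDegree := by
    rw [roots_fibPoly, card_val, card_fibPolyRoots, natDegree_fibPoly]
  rw [show H = fibPoly ℝ n from (fibPoly_eq_sum_range_half ℝ n).symm, aeval_def,
    ← mem_roots_map_of_injective (algebraMap ℝ ℂ).injective (fibPoly_ne_zero ℝ n),
    ← roots_map_of_injective_of_card_eq_natDegree (algebraMap ℝ ℂ).injective hcard,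
    roots_fibPoly]
  simp [fibPolyRoots, eq_comm]

theorem stmt_2 (n : ℕ) (hn : 0 < n) :
    let H : Polynomial ℝ := ∑ j ∈ Finset.range (n / 2 + 1), C (((n - j).choose j : ℝ)) * X ^ j
    ∀ z : ℂ, aeval z H = 0 ↔
      ∃ k ∈ Finset.Icc 1 (n / 2),
        z = (-(1 / 4) * (1 / Real.cos (k * Real.pi / (n + 1))) ^ 2 : ℝ) :=
  stmt_2_general n
end

section
/- For every positive integer n, the Narayana polynomial N_n(x) = \sum_{i=0}^{n-1} \frac{1}{n} \binom{n}{i} \binom{n}{i+1} x^i has only real zeros. -/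
/-! `X^n (1 - X)^n` has only real roots, so by Rolle's theorem so does its `(n-1)`-st derivative.
By the Leibniz rule that derivative is
`∑ₖ (-1)^k (n-1)! C(n,k) C(n,k+1) X^(k+1) (1 - X)^(n-k)`, and the Möbius substitution
`x = 1 + (z - 1)⁻¹` turns it, after multiplying by `(z - 1)^(n+1)`, into `(-1)^n n! z N_n(z)`.
Hence a non-real zero `z` of `N_n` would give the non-real zero `1 + (z - 1)⁻¹` of a real-rooted
polynomial. -/

open Polynomial Finset
open scoped Nat

theorem Nat.choose_mul_descFactorial_mul_descFactorial {m k : ℕ} (hk : k ≤ m) :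
    m.choose k * (m + 1).descFactorial (m - k) * (m + 1).descFactorial k =
      m ! * ((m + 1).choose k * (m + 1).choose (k + 1)) := by
  rw [Nat.descFactorial_eq_factorial_mul_choose, Nat.descFactorial_eq_factorial_mul_choose,
    ← Nat.choose_mul_factorial_mul_factorial hk,
    Nat.choose_symm_of_eq_add (show m + 1 = (m - k) + (k + 1) by omega)]
  ring

namespace Polynomial

theorem natDegree_iterate_derivative_eq {R : Type*} [Semiring R] [IsAddTorsionFree R] (p : R[X])
    (k : ℕ) : (derivative^[k] p).natDegree = p.natDegree - k := by
  induction k with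
  | zero => rfl
  | succ k ih => rw [Function.iterate_succ_apply', natDegree_derivative, ih, Nat.sub_sub]

theorem Splits.derivative_of_real {p : ℝ[X]} (hp : p.Splits) : p.derivative.Splits := by
  rw [splits_iff_card_roots] at hp ⊢
  have := card_roots' (derivative p)
  have := natDegree_derivative_le p
  have := card_roots_le_derivative p
  omega

theorem Splits.iterate_derivative_of_real {p : ℝ[X]} (hp : p.Splits) (k : ℕ) :
    (derivative^[k] p).Splits := by
  induction k with
  | zero => exact hp
  | succ k ih => rw [Function.iterate_succ_apply']; exact ih.derivative_of_real

theorem Splits.im_eq_zero_of_aeval_eq_zero {p : ℝ[X]} (hp : p.Splits) (hp0 : p ≠ 0) {z : ℂ}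
    (hz : aeval z p = 0) : z.im = 0 := by
  obtain ⟨r, rfl⟩ := hp.mem_range_of_isRoot hp0 (i := algebraMap ℝ ℂ)
    (by rwa [IsRoot, eval_map_algebraMap])
  simp

section XPowMulOneSubXPow

theorem splits_iterate_derivative_X_pow_mul_one_sub_X_pow (a b k : ℕ) :
    (derivative^[k] ((X : ℝ[X]) ^ a * (1 - X) ^ b)).Splits := by
  have h1X : Splits (1 - X : ℝ[X]) := by simpa using (Splits.X_sub_C (1 : ℝ)).neg
  exact ((Splits.X_pow a).mul (h1X.pow b)).iterate_derivative_of_real k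

variable {R : Type*} [CommRing R]

theorem iterate_derivative_X_pow_mul_one_sub_X_pow_ne_zero [IsDomain R] [CharZero R]
    {a b k : ℕ} (hk : k < a + b) : derivative^[k] ((X : R[X]) ^ a * (1 - X) ^ b) ≠ 0 := by
  have hdeg : ((X : R[X]) ^ a * (1 - X) ^ b).natDegree = a + b := by compute_degree!
  refine ne_zero_of_natDegree_gt (n := 0) ?_
  rw [natDegree_iterate_derivative_eq, hdeg]
  omega

theorem iterate_derivative_X_pow_mul_one_sub_X_pow (m : ℕ) :
    derivative^[m] ((X : R[X]) ^ (m + 1) * (1 - X) ^ (m + 1)) =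
      ∑ k ∈ range (m + 1),
        C ((-1) ^ k * ((m ! * ((m + 1).choose k * (m + 1).choose (k + 1)) : ℕ) : R)) *
          (X ^ (k + 1) * (1 - X) ^ (m + 1 - k)) := by
  have h1X : ((1 : R[X]) - X) ^ (m + 1) = (X ^ (m + 1)).comp (1 - X) := by simp
  rw [iterate_derivative_mul, h1X]
  refine sum_congr rfl fun k hk => ?_
  have hk : k ≤ m := Nat.lt_succ_iff.mp (mem_range.mp hk)
  rw [iterate_derivative_comp_one_sub_X, iterate_derivative_X_pow_eq_C_mul,
    iterate_derivative_X_pow_eq_C_mul, ← Nat.choose_mul_descFactorial_mul_descFactorial hk,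
    show m + 1 - (m - k) = k + 1 by omega]
  simp only [nsmul_eq_mul, mul_comp, natCast_comp, X_pow_comp, Nat.cast_mul, map_mul, map_pow,
    map_neg, map_one, map_natCast]
  ring

theorem aeval_iterate_derivative_X_pow_mul_one_sub_X_pow {K : Type*} [Field K] [Algebra R K]
    (m : ℕ) {z : K} (hz : z ≠ 1) :
    (z - 1) ^ (m + 2) *
        aeval (1 + (z - 1)⁻¹) (derivative^[m] ((X : R[X]) ^ (m + 1) * (1 - X) ^ (m + 1))) =
      (-1) ^ (m + 1) * m ! * z *
        ∑ k ∈ range (m + 1), ((m + 1).choose k * (m + 1).choose (k + 1) : K) * z ^ k := by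
  rw [iterate_derivative_X_pow_mul_one_sub_X_pow, map_sum, mul_sum, mul_sum]
  refine sum_congr rfl fun k hk => ?_
  have hk : k ≤ m := Nat.lt_succ_iff.mp (mem_range.mp hk)
  have hz1 : z - 1 ≠ 0 := sub_ne_zero.mpr hz
  have hmobius : (z - 1) ^ (m + 2) *
      ((1 + (z - 1)⁻¹) ^ (k + 1) * (1 - (1 + (z - 1)⁻¹)) ^ (m + 1 - k)) =
        z ^ (k + 1) * (-1) ^ (m + 1 - k) := by
    rw [show m + 2 = (k + 1) + (m + 1 - k) by omega, pow_add, mul_mul_mul_comm, ← mul_pow,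
      ← mul_pow]
    congr 2 <;> field_simp <;> ring
  have hsign : (-1 : K) ^ k * (-1) ^ (m + 1 - k) = (-1) ^ (m + 1) := by
    rw [← pow_add, Nat.add_sub_cancel' (by omega)]
  simp only [map_mul, map_pow, map_sub, map_one, aeval_X, map_neg, map_natCast, Nat.cast_mul]
  rw [mul_left_comm, hmobius]
  linear_combination
    ((m ! : K) * (m + 1).choose k * (m + 1).choose (k + 1) * z ^ (k + 1)) * hsign

end XPowMulOneSubXPow

end Polynomial

theorem stmt_16 (n : ℕ) (hn : 0 < n) :
    ∀ z : ℂ, aeval z (∑ i ∈ Finset.range n,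
        C ((1 / (n : ℝ)) * (n.choose i) * (n.choose (i + 1))) * (X : Polynomial ℝ) ^ i) = 0 →
      z.im = 0 := by
  intro z hz
  obtain ⟨m, rfl⟩ : ∃ m, n = m + 1 := ⟨n - 1, by omega⟩
  rcases eq_or_ne z 1 with rfl | hz1
  · simp
  have hsum :
      ∑ k ∈ range (m + 1), ((m + 1).choose k * (m + 1).choose (k + 1) : ℂ) * z ^ k = 0 := by
    simp only [map_sum, map_mul, aeval_C, aeval_X, map_pow, Complex.coe_algebraMap] at hz
    push_cast at hz
    simp_rw [mul_assoc] at hz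
    rw [← mul_sum, mul_eq_zero] at hz
    simpa [mul_assoc] using hz.resolve_left (by simp [Nat.cast_add_one_ne_zero])
  set p := derivative^[m] ((X : ℝ[X]) ^ (m + 1) * (1 - X) ^ (m + 1))
  set w := 1 + (z - 1)⁻¹
  have hw : aeval w p = 0 := by
    have key := aeval_iterate_derivative_X_pow_mul_one_sub_X_pow (R := ℝ) m hz1
    rw [hsum, mul_zero] at key
    exact (mul_eq_zero.mp key).resolve_left (pow_ne_zero _ (sub_ne_zero.mpr hz1))
  have hw_im : w.im = 0 :=
    (splits_iterate_derivative_X_pow_mul_one_sub_X_pow _ _ m).im_eq_zero_of_aeval_eq_zero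
      (iterate_derivative_X_pow_mul_one_sub_X_pow_ne_zero (by omega)) hw
  have hzw : z = 1 + (w - 1)⁻¹ := by simp [w]
  rw [hzw]
  simp [Complex.inv_im, hw_im]
end

section
/- The polynomial 44x(1+x)^6 + 484x^2(1+x)^4 + 784x^3(1+x)^2 + 120x^4 has only real zeros. -/
/-! With `u = z / (1 + z) ^ 2` the polynomial is
`4 z (1 + z) ^ 6 (11 + 121 u + 196 u ^ 2 + 30 u ^ 3)`.
The cubic factor has only real roots, which are negative since its coefficients are positive.
For real `s ≤ 1 / 4` the equation `s (1 + z) ^ 2 = z` is a real quadratic in `z` with discriminant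
`1 - 4 s ≥ 0`, so `z` is real as well. -/

open Complex

theorem Complex.im_eq_zero_of_quadratic_eq_zero {a b c : ℝ} (ha : a ≠ 0)
    (hd : 0 ≤ discrim a b c) {z : ℂ} (hz : a * (z * z) + b * z + c = 0) : z.im = 0 := by
  have hsq : discrim (a : ℂ) b c = (√(discrim a b c) : ℂ) * (√(discrim a b c) : ℂ) := by
    rw [← ofReal_mul, Real.mul_self_sqrt hd]; simp [discrim]
  rcases (quadratic_eq_zero_iff (ofReal_ne_zero.mpr ha) hsq z).mp hz with rfl | rfl <;>
    norm_cast

theorem Complex.im_eq_zero_of_ofReal_mul_one_add_sq_eq {s : ℝ} (hs : s ≤ 1 / 4) {z : ℂ}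
    (h : s * (1 + z) ^ 2 = z) : z.im = 0 := by
  rcases eq_or_ne s 0 with rfl | hs0
  · obtain rfl : z = 0 := by simpa using h.symm
    rfl
  refine im_eq_zero_of_quadratic_eq_zero (b := 2 * s - 1) (c := s) hs0 ?_ ?_
  · rw [discrim]; nlinarith
  · push_cast; linear_combination h

theorem cubic_re_ne_zero_of_sq_im_eq {s t : ℝ} (ht : 30 * t ^ 2 = 121 + 392 * s + 90 * s ^ 2) :
    11 + 121 * s + 196 * (s ^ 2 - t ^ 2) + 30 * (s ^ 3 - 3 * s * t ^ 2) ≠ 0 := by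
  intro h
  -- eliminating `t ^ 2` leaves a cubic in `s` that has no root where `t ^ 2 ≥ 0`
  have hs : 7200 * s ^ 3 + 47040 * s ^ 2 + 84092 * s + 23386 = 0 := by
    linear_combination (-30) * h - (196 + 90 * s) * ht
  nlinarith [sq_nonneg t, sq_nonneg (s + 3)]

theorem cubic_root_im_eq_zero_and_re_neg {u : ℂ}
    (hu : 11 + 121 * u + 196 * u ^ 2 + 30 * u ^ 3 = 0) : u.im = 0 ∧ u.re < 0 := by
  obtain ⟨hre, him⟩ := Complex.ext_iff.mp hu
  simp only [pow_succ, pow_zero, one_mul, add_re, add_im, mul_re, mul_im, re_ofNat, im_ofNat,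
    zero_re, zero_im, zero_mul, sub_zero, add_zero] at hre him
  have him0 : u.im = 0 := by
    have hfac : u.im * (121 + 392 * u.re + 90 * u.re ^ 2 - 30 * u.im ^ 2) = 0 := by
      linear_combination him
    refine (mul_eq_zero.mp hfac).resolve_right fun ht ↦ ?_
    exact cubic_re_ne_zero_of_sq_im_eq (s := u.re) (t := u.im) (by linear_combination -ht)
      (by linear_combination hre)
  refine ⟨him0, ?_⟩
  rw [him0] at hre
  nlinarith [sq_nonneg u.re]

theorem stmt_17 :
    ∀ z : ℂ, 44 * z * (1 + z) ^ 6 + 484 * z ^ 2 * (1 + z) ^ 4 + 784 * z ^ 3 * (1 + z) ^ 2 +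
        120 * z ^ 4 = 0 → z.im = 0 := by
  intro z h
  rcases eq_or_ne (1 + z) 0 with hz1 | hz1
  · obtain rfl : z = -1 := by linear_combination hz1
    simp
  rcases eq_or_ne z 0 with rfl | hz0
  · rfl
  set u := z / (1 + z) ^ 2 with hu
  have hcubic : 11 + 121 * u + 196 * u ^ 2 + 30 * u ^ 3 = 0 := by
    have : 4 * z * (1 + z) ^ 6 * (11 + 121 * u + 196 * u ^ 2 + 30 * u ^ 3) = 0 := by
      rw [← h, hu]; field_simp; ring
    simpa [hz0, hz1] using this
  obtain ⟨him, hre⟩ := cubic_root_im_eq_zero_and_re_neg hcubic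
  refine im_eq_zero_of_ofReal_mul_one_add_sq_eq (s := u.re) (by linarith) ?_
  have hu_real : (u.re : ℂ) = u := Complex.ext rfl (by simp [him])
  rw [hu_real, hu]
  field_simp
end
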